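/- Lifting lemma for the Gröbner walk: Let H be a Gröbner basis of I with respect to a term ordering <, and let ω ∈ ℚ^n_{≥0} lie in the closed Gröbner cone of < for I. If M = {m_1,...,m_r} is a Gröbner basis of in_ω(I) with respect to the refinement ordering <'_ω of ω by another term ordering <', then G = {m_1 − nf_H(m_1), ..., m_r − nf_H(m_r)} is a Gröbner basis of I with respect to <'_ω, where nf_H denotes the normal form with respect to H and <. -/

import Mathlib

/-!
Call a monomial standard if no `t`-leading monomial of `H` divides it, so that `nf_H(m)` is a
combination of standard monomials. Since `ω` is a limit of weights `v` with `in_v(I) = in_t(I)`,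
and `in_v(F)` is a part of `in_ω(F)` once `v` is close enough to `ω`, no nonzero element of
`in_ω(I)` is a combination of standard monomials. As `in_ω(I)` contains the `ω`-homogeneous
components of its elements, it follows that for `m ∈ in_ω(I)` every monomial of `N = nf_H(m)` is
`ω`-lighter than some monomial of `m`: otherwise the top component of `N` would lie in `in_ω(I)`.
So `m - N` has the same `<'_ω`-leading term as `m`, and these leading terms generate
`in_{<'_ω}(in_ω(I)) = in_{<'_ω}(I)`, because `<'_ω` refines `ω`.
-/

open MvPolynomial

/-- A term ordering on the monomials (exponent vectors) of `k[x_1, …, x_n]`: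
a strict total well-ordering compatible with addition of exponents. -/
structure TermOrder (n : ℕ) where
  lt : (Fin n →₀ ℕ) → (Fin n →₀ ℕ) → Prop
  irrefl : ∀ a, ¬ lt a a
  trans : ∀ a b c, lt a b → lt b c → lt a c
  trichotomous : ∀ a b, lt a b ∨ a = b ∨ lt b a
  wf : WellFounded lt
  add_right : ∀ a b c, lt a b → lt (a + c) (b + c)

variable {n : ℕ}

/-- `α` is the exponent vector of the `t`-leading term of `f`. -/
def TermOrder.IsLeadExp {k : Type*} [CommSemiring k] (t : TermOrder n)
    (f : MvPolynomial (Fin n) k) (α : Fin n →₀ ℕ) : Prop :=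
  α ∈ f.support ∧ ∀ β ∈ f.support, β ≠ α → t.lt β α

open Classical in
/-- The exponent vector of the `t`-leading term of `f` (junk value `0` if none exists). -/
noncomputable def TermOrder.leadExp {k : Type*} [CommSemiring k] (t : TermOrder n)
    (f : MvPolynomial (Fin n) k) : Fin n →₀ ℕ :=
  if h : ∃ α, t.IsLeadExp f α then h.choose else 0

/-- The leading term `in_t(f)` of `f` with respect to the term ordering `t`. -/
noncomputable def TermOrder.leadTerm {k : Type*} [CommSemiring k] (t : TermOrder n)
    (f : MvPolynomial (Fin n) k) : MvPolynomial (Fin n) k :=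
  monomial (t.leadExp f) (coeff (t.leadExp f) f)

/-- The initial ideal `in_t(I)` of `I` with respect to the term ordering `t`. -/
noncomputable def initialIdealT {k : Type*} [CommSemiring k] (t : TermOrder n)
    (I : Ideal (MvPolynomial (Fin n) k)) : Ideal (MvPolynomial (Fin n) k) :=
  Ideal.span { p | ∃ f ∈ I, f ≠ 0 ∧ p = t.leadTerm f }

/-- The `ω`-weight `⟨ω, α⟩` of an exponent vector `α`. -/
noncomputable def wt (ω : Fin n → ℝ) (α : Fin n →₀ ℕ) : ℝ :=
  ∑ i, ω i * (α i : ℝ)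

/-- The initial form `in_ω(f)`: the sum of the terms of `f` of maximal `ω`-weight. -/
noncomputable def initialForm {k : Type*} [CommSemiring k] (ω : Fin n → ℝ)
    (f : MvPolynomial (Fin n) k) : MvPolynomial (Fin n) k :=
  ∑ α ∈ f.support.filter (fun α => ∀ β ∈ f.support, wt ω β ≤ wt ω α),
    monomial α (coeff α f)

/-- The generalized initial ideal `in_ω(I)` of `I` with respect to the weight vector `ω`. -/
noncomputable def initialIdealW {k : Type*} [CommSemiring k] (ω : Fin n → ℝ)
    (I : Ideal (MvPolynomial (Fin n) k)) : Ideal (MvPolynomial (Fin n) k) :=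
  Ideal.span { p | ∃ f ∈ I, f ≠ 0 ∧ p = initialForm ω f }

/-- The refinement `<_ω` of the weight vector `ω` by the term ordering `t`:
compare first by `ω`-weight, break ties with `t`. -/
def refineLt (ω : Fin n → ℝ) (t : TermOrder n) (α β : Fin n →₀ ℕ) : Prop :=
  wt ω α < wt ω β ∨ (wt ω α = wt ω β ∧ t.lt α β)

/-- `G` is a Gröbner basis of `I` w.r.t. `t`: `G ⊆ I` and the leading terms of the
elements of `G` generate the initial ideal `in_t(I)`. -/
def IsGroebnerBasis {k : Type*} [CommSemiring k] (t : TermOrder n)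
    (I : Ideal (MvPolynomial (Fin n) k)) (G : Finset (MvPolynomial (Fin n) k)) : Prop :=
  (∀ g ∈ G, g ∈ I) ∧
    Ideal.span ((fun g => t.leadTerm g) '' (G : Set (MvPolynomial (Fin n) k)))
      = initialIdealT t I

open Classical in
/-- `G` is the reduced (marked) Gröbner basis of `I` w.r.t. `t`:
a Gröbner basis that is minimal, monic and reduced. -/
def IsReducedGB {k : Type*} [CommSemiring k] (t : TermOrder n)
    (I : Ideal (MvPolynomial (Fin n) k)) (G : Finset (MvPolynomial (Fin n) k)) : Prop :=
  IsGroebnerBasis t I G ∧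
  (∀ g ∈ G, coeff (t.leadExp g) g = 1) ∧
  (∀ g ∈ G, ∀ g' ∈ G, g ≠ g' → ∀ α ∈ g.support, ¬ t.leadExp g' ≤ α) ∧
  (∀ g ∈ G, ¬ IsGroebnerBasis t I (G.erase g))

lemma wt_eq_weight (ω : Fin n → ℝ) (α : Fin n →₀ ℕ) : wt ω α = Finsupp.weight ω α := by
  simp [wt, Finsupp.weight_apply, Finsupp.sum_fintype, mul_comm]

lemma wt_add (ω : Fin n → ℝ) (α β : Fin n →₀ ℕ) : wt ω (α + β) = wt ω α + wt ω β := by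
  simp only [wt_eq_weight, map_add]

lemma continuous_wt (α : Fin n →₀ ℕ) : Continuous fun ω : Fin n → ℝ => wt ω α := by
  unfold wt; fun_prop

section InitialForm

variable {k : Type*} [CommSemiring k] {ω : Fin n → ℝ} {w : ℝ} {f : MvPolynomial (Fin n) k}
  {β : Fin n →₀ ℕ}

lemma coeff_initialForm :
    coeff β (initialForm ω f) = if ∀ γ ∈ f.support, wt ω γ ≤ wt ω β then coeff β f else 0 := by
  classical
  rw [initialForm, coeff_sum]
  simp only [coeff_monomial, Finset.sum_ite_eq', Finset.mem_filter, mem_support_iff]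
  split_ifs <;> simp_all

lemma mem_support_initialForm :
    β ∈ (initialForm ω f).support ↔ β ∈ f.support ∧ ∀ γ ∈ f.support, wt ω γ ≤ wt ω β := by
  rw [mem_support_iff, coeff_initialForm, mem_support_iff]
  by_cases h : ∀ γ ∈ f.support, wt ω γ ≤ wt ω β
  · simp only [if_pos h]; tauto
  · simp only [if_neg h, ne_eq, not_true_eq_false]; tauto

lemma coeff_weightedHomogeneousComponent_wt :
    coeff β (weightedHomogeneousComponent ω w f) = if wt ω β = w then coeff β f else 0 := by
  classical
  rw [coeff_weightedHomogeneousComponent, wt_eq_weight]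

lemma mem_support_weightedHomogeneousComponent :
    β ∈ (weightedHomogeneousComponent ω w f).support ↔ wt ω β = w ∧ β ∈ f.support := by
  rw [mem_support_iff, coeff_weightedHomogeneousComponent_wt, mem_support_iff]
  split_ifs with h <;> simp [h]

lemma weightedHomogeneousComponent_ne_zero (hβ : β ∈ f.support) :
    weightedHomogeneousComponent ω (wt ω β) f ≠ 0 :=
  ne_zero_iff.2 ⟨β, mem_support_iff.1 (mem_support_weightedHomogeneousComponent.2 ⟨rfl, hβ⟩)⟩

lemma initialForm_ne_zero (ω : Fin n → ℝ) (hf : f ≠ 0) : initialForm ω f ≠ 0 := by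
  obtain ⟨β, hβ, htop⟩ := f.support.exists_max_image (wt ω) (support_nonempty.2 hf)
  exact ne_zero_iff.2 ⟨β, mem_support_iff.1 (mem_support_initialForm.2 ⟨hβ, htop⟩)⟩

lemma initialForm_eq_weightedHomogeneousComponent (hle : ∀ γ ∈ f.support, wt ω γ ≤ w)
    (hne : weightedHomogeneousComponent ω w f ≠ 0) :
    initialForm ω f = weightedHomogeneousComponent ω w f := by
  obtain ⟨γ, hγ⟩ := support_nonempty.2 hne
  obtain ⟨hγw, hγf⟩ := mem_support_weightedHomogeneousComponent.1 hγ
  ext β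
  rw [coeff_initialForm, coeff_weightedHomogeneousComponent_wt]
  by_cases hβ : β ∈ f.support
  · have htop : (∀ γ ∈ f.support, wt ω γ ≤ wt ω β) ↔ wt ω β = w :=
      ⟨fun h => (hle β hβ).antisymm (hγw ▸ h γ hγf), fun h γ hγ => h ▸ hle γ hγ⟩
    simp only [htop]
  · simp [notMem_support_iff.1 hβ]

lemma weightedHomogeneousComponent_monomial_mul (γ : Fin n →₀ ℕ) (c : k) :
    weightedHomogeneousComponent ω w (monomial γ c * f) =
      monomial γ c * weightedHomogeneousComponent ω (w - wt ω γ) f := by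
  ext β
  rw [coeff_weightedHomogeneousComponent_wt, coeff_monomial_mul', coeff_monomial_mul',
    coeff_weightedHomogeneousComponent_wt]
  by_cases hγ : γ ≤ β
  · have hwt : wt ω (β - γ) = wt ω β - wt ω γ := by
      rw [eq_sub_iff_add_eq, ← wt_add, tsub_add_cancel_of_le hγ]
    simp only [if_pos hγ, hwt, sub_left_inj]
    split_ifs <;> simp
  · simp [hγ]

end InitialForm

namespace TermOrder

variable {k : Type*} [CommSemiring k] (t : TermOrder n) {f : MvPolynomial (Fin n) k}
  {α β : Fin n →₀ ℕ}

lemma exists_isLeadExp (hf : f ≠ 0) : ∃ α, t.IsLeadExp f α := by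
  have : IsStrictOrder _ (Function.swap t.lt) :=
    { irrefl := t.irrefl, trans := fun a b c hab hbc => t.trans c b a hbc hab }
  obtain ⟨γ, hγ⟩ := support_nonempty.2 hf
  obtain ⟨⟨α, hα⟩, -, hmax⟩ := (f.support.finite_toSet.wellFoundedOn
    (r := Function.swap t.lt)).has_min Set.univ ⟨⟨γ, hγ⟩, trivial⟩
  refine ⟨α, hα, fun β hβ hne => ?_⟩
  rcases t.trichotomous β α with h | rfl | h
  exacts [h, absurd rfl hne, absurd h (hmax ⟨β, hβ⟩ trivial)]

variable {t}

lemma IsLeadExp.unique (hα : t.IsLeadExp f α) (hβ : t.IsLeadExp f β) : α = β := by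
  by_contra hne
  exact t.irrefl α (t.trans _ _ _ (hβ.2 α hα.1 hne) (hα.2 β hβ.1 (Ne.symm hne)))

lemma leadExp_eq_of_isLeadExp (h : t.IsLeadExp f α) : t.leadExp f = α := by
  have hex : ∃ α, t.IsLeadExp f α := ⟨α, h⟩
  rw [leadExp, dif_pos hex]
  exact hex.choose_spec.unique h

lemma isLeadExp_leadExp (hf : f ≠ 0) : t.IsLeadExp f (t.leadExp f) := by
  obtain ⟨α, hα⟩ := t.exists_isLeadExp hf
  rwa [leadExp_eq_of_isLeadExp hα]

lemma leadTerm_eq_of_isLeadExp (h : t.IsLeadExp f α) : t.leadTerm f = monomial α (coeff α f) := by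
  rw [leadTerm, leadExp_eq_of_isLeadExp h]

lemma leadTerm_zero : t.leadTerm (0 : MvPolynomial (Fin n) k) = 0 := by
  simp [leadTerm]

end TermOrder

section Refinement

variable {k : Type*} [CommRing k] {ω : Fin n → ℝ} {t' t'' : TermOrder n}
  {f m N : MvPolynomial (Fin n) k}

lemma wt_le_wt_leadExp (ht'' : t''.lt = refineLt ω t') (hf : f ≠ 0) {β : Fin n →₀ ℕ}
    (hβ : β ∈ f.support) : wt ω β ≤ wt ω (t''.leadExp f) := by
  by_cases h : β = t''.leadExp f
  · rw [h]
  · have hlt := (TermOrder.isLeadExp_leadExp hf).2 β hβ h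
    rw [ht''] at hlt
    exact hlt.elim le_of_lt fun h => h.1.le

lemma leadTerm_initialForm (ht'' : t''.lt = refineLt ω t') (hf : f ≠ 0) :
    t''.leadTerm (initialForm ω f) = t''.leadTerm f := by
  have hlead := TermOrder.isLeadExp_leadExp (t := t'') hf
  have htop : ∀ γ ∈ f.support, wt ω γ ≤ wt ω (t''.leadExp f) :=
    fun γ hγ => wt_le_wt_leadExp ht'' hf hγ
  have hinit : t''.IsLeadExp (initialForm ω f) (t''.leadExp f) :=
    ⟨mem_support_initialForm.2 ⟨hlead.1, htop⟩,
      fun β hβ => hlead.2 β (mem_support_initialForm.1 hβ).1⟩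
  rw [TermOrder.leadTerm_eq_of_isLeadExp hinit, TermOrder.leadTerm_eq_of_isLeadExp hlead,
    coeff_initialForm, if_pos htop]

lemma leadTerm_sub_of_wt_lt (ht'' : t''.lt = refineLt ω t')
    (hN : ∀ β ∈ N.support, ∃ α ∈ m.support, wt ω β < wt ω α) :
    t''.leadTerm (m - N) = t''.leadTerm m := by
  by_cases hm : m = 0
  · have hN0 : N = 0 := support_eq_empty.1 <|
      Finset.eq_empty_of_forall_notMem fun β hβ => by simpa [hm] using hN β hβ
    rw [hm, hN0, sub_zero]
  have hlead := TermOrder.isLeadExp_leadExp (t := t'') hm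
  have hNlt : ∀ β ∈ N.support, wt ω β < wt ω (t''.leadExp m) := fun β hβ => by
    obtain ⟨α, hα, hlt⟩ := hN β hβ
    exact hlt.trans_le (wt_le_wt_leadExp ht'' hm hα)
  have hcoeff : coeff (t''.leadExp m) (m - N) = coeff (t''.leadExp m) m := by
    rw [coeff_sub, notMem_support_iff.1 fun h => (hNlt _ h).false, sub_zero]
  have hsub : t''.IsLeadExp (m - N) (t''.leadExp m) := by
    refine ⟨by rw [mem_support_iff, hcoeff]; exact mem_support_iff.1 hlead.1, fun β hβ hne => ?_⟩
    rcases Finset.mem_union.1 (support_sub _ _ _ hβ) with hβm | hβN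
    · exact hlead.2 β hβm hne
    · rw [ht'']; exact Or.inl (hNlt β hβN)
  rw [TermOrder.leadTerm_eq_of_isLeadExp hsub, TermOrder.leadTerm_eq_of_isLeadExp hlead, hcoeff]

end Refinement

section InitialIdeal

variable {k : Type*} [CommRing k] {ω : Fin n → ℝ} {I : Ideal (MvPolynomial (Fin n) k)}
  {f p : MvPolynomial (Fin n) k}

lemma initialForm_mem_initialIdealW (hf : f ∈ I) (hf0 : f ≠ 0) :
    initialForm ω f ∈ initialIdealW ω I :=
  Ideal.subset_span ⟨f, hf, hf0, rfl⟩

/-- The property passes from the generators `in_ω(f)` to all of `in_ω(I)`, and makes each nonzero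
homogeneous component of an element of `in_ω(I)` the initial form of an element of `I`. -/
def HasLiftedComponents (ω : Fin n → ℝ) (I : Ideal (MvPolynomial (Fin n) k))
    (q : MvPolynomial (Fin n) k) : Prop :=
  ∀ w, ∃ F ∈ I, (∀ α ∈ F.support, wt ω α ≤ w) ∧
    weightedHomogeneousComponent ω w F = weightedHomogeneousComponent ω w q

namespace HasLiftedComponents

lemma zero : HasLiftedComponents ω I 0 :=
  fun _ => ⟨0, I.zero_mem, by simp, rfl⟩

lemma add {q q' : MvPolynomial (Fin n) k} (h : HasLiftedComponents ω I q)
    (h' : HasLiftedComponents ω I q') : HasLiftedComponents ω I (q + q') := by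
  classical
  intro w
  obtain ⟨F, hF, hFw, hFq⟩ := h w
  obtain ⟨F', hF', hFw', hFq'⟩ := h' w
  refine ⟨F + F', I.add_mem hF hF', fun α hα => ?_, by rw [map_add, map_add, hFq, hFq']⟩
  rcases Finset.mem_union.1 (support_add hα) with hα | hα
  exacts [hFw α hα, hFw' α hα]

lemma monomial_mul {q : MvPolynomial (Fin n) k} (h : HasLiftedComponents ω I q)
    (γ : Fin n →₀ ℕ) (c : k) : HasLiftedComponents ω I (monomial γ c * q) := by
  intro w
  obtain ⟨F, hF, hFw, hFq⟩ := h (w - wt ω γ)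
  refine ⟨monomial γ c * F, I.mul_mem_left _ hF, fun α hα => ?_, by
    rw [weightedHomogeneousComponent_monomial_mul, weightedHomogeneousComponent_monomial_mul, hFq]⟩
  rw [mem_support_iff, coeff_monomial_mul'] at hα
  split_ifs at hα with hγ
  · have hαγ := hFw (α - γ) (mem_support_iff.2 (right_ne_zero_of_mul hα))
    rw [← tsub_add_cancel_of_le hγ, wt_add]
    linarith
  · exact absurd rfl hα

lemma initialForm (hf : f ∈ I) : HasLiftedComponents ω I (_root_.initialForm ω f) := by
  intro w
  by_cases hw : weightedHomogeneousComponent ω w (_root_.initialForm ω f) = 0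
  · exact ⟨0, I.zero_mem, by simp, by rw [hw, map_zero]⟩
  obtain ⟨β, hβ⟩ := support_nonempty.2 hw
  obtain ⟨rfl, hβf⟩ := mem_support_weightedHomogeneousComponent.1 hβ
  have htop := (mem_support_initialForm.1 hβf).2
  refine ⟨f, hf, htop, ?_⟩
  ext α
  rw [coeff_weightedHomogeneousComponent_wt, coeff_weightedHomogeneousComponent_wt,
    coeff_initialForm]
  split_ifs with hα h <;> first | rfl | exact absurd (hα ▸ htop) h

end HasLiftedComponents

lemma hasLiftedComponents_of_mem_initialIdealW (hp : p ∈ initialIdealW ω I) :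
    HasLiftedComponents ω I p := by
  induction hp using Submodule.span_induction with
  | mem x hx =>
    obtain ⟨f, hf, -, rfl⟩ := hx
    exact .initialForm hf
  | zero => exact .zero
  | add x y _ _ hx hy => exact hx.add hy
  | smul a x _ hx =>
    rw [smul_eq_mul, a.as_sum, Finset.sum_mul]
    exact Finset.sum_induction _ _ (fun _ _ => .add) .zero fun γ _ => hx.monomial_mul γ _

lemma weightedHomogeneousComponent_mem_initialIdealW_of_mem {w : ℝ} (hf : f ∈ I)
    (hle : ∀ α ∈ f.support, wt ω α ≤ w) :
    weightedHomogeneousComponent ω w f ∈ initialIdealW ω I := by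
  by_cases hw : weightedHomogeneousComponent ω w f = 0
  · rw [hw]; exact zero_mem _
  rw [← initialForm_eq_weightedHomogeneousComponent hle hw]
  exact initialForm_mem_initialIdealW hf fun h => hw (by rw [h, map_zero])

lemma weightedHomogeneousComponent_mem_initialIdealW (hp : p ∈ initialIdealW ω I) (w : ℝ) :
    weightedHomogeneousComponent ω w p ∈ initialIdealW ω I := by
  obtain ⟨F, hF, hFw, hFp⟩ := hasLiftedComponents_of_mem_initialIdealW hp w
  exact hFp ▸ weightedHomogeneousComponent_mem_initialIdealW_of_mem hF hFw

lemma exists_initialForm_eq_weightedHomogeneousComponent (hp : p ∈ initialIdealW ω I) {w : ℝ}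
    (hw : weightedHomogeneousComponent ω w p ≠ 0) :
    ∃ F ∈ I, F ≠ 0 ∧ initialForm ω F = weightedHomogeneousComponent ω w p := by
  obtain ⟨F, hF, hFw, hFp⟩ := hasLiftedComponents_of_mem_initialIdealW hp w
  refine ⟨F, hF, fun h => hw (by rw [← hFp, h, map_zero]), ?_⟩
  rw [initialForm_eq_weightedHomogeneousComponent hFw (hFp ▸ hw), hFp]

end InitialIdeal

lemma exists_mem_wt_lt_of_mem_closure {ω : Fin n → ℝ} {S : Set (Fin n → ℝ)}
    (hω : ω ∈ closure S) (A : Finset (Fin n →₀ ℕ)) :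
    ∃ v ∈ S, ∀ α ∈ A, ∀ β ∈ A, wt ω α < wt ω β → wt v α < wt v β := by
  have hnear : ∀ᶠ v in nhds ω, ∀ α ∈ A, ∀ β ∈ A, wt ω α < wt ω β → wt v α < wt v β := by
    simp only [Filter.eventually_all_finset]
    intro α _ β _
    by_cases h : wt ω α < wt ω β
    · filter_upwards [(continuous_wt α).continuousAt.eventually_lt
        (continuous_wt β).continuousAt h] with v hv using fun _ => hv
    · exact Filter.Eventually.of_forall fun _ hlt => absurd hlt h
  exact (mem_closure_iff_frequently.1 hω).and_eventually hnear |>.exists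

lemma support_initialForm_subset {k : Type*} [CommSemiring k] {ω v : Fin n → ℝ}
    {F : MvPolynomial (Fin n) k}
    (hv : ∀ α ∈ F.support, ∀ β ∈ F.support, wt ω α < wt ω β → wt v α < wt v β) :
    (initialForm v F).support ⊆ (initialForm ω F).support := by
  intro α hα
  obtain ⟨hαF, hαtop⟩ := mem_support_initialForm.1 hα
  refine mem_support_initialForm.2 ⟨hαF, fun γ hγ => ?_⟩
  by_contra! hlt
  exact (hαtop γ hγ).not_gt (hv α hαF γ hγ hlt)

lemma exists_leadExp_le_of_mem_span_leadTerm {k : Type*} [CommSemiring k] {t : TermOrder n}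
    {H : Set (MvPolynomial (Fin n) k)} {r : MvPolynomial (Fin n) k}
    (hr : r ∈ Ideal.span (t.leadTerm '' H)) {α : Fin n →₀ ℕ} (hα : α ∈ r.support) :
    ∃ h ∈ H, t.leadExp h ≤ α := by
  have hspan : Ideal.span (t.leadTerm '' H) ≤
      Ideal.span ((fun s => monomial s (1 : k)) '' (t.leadExp '' H)) := by
    rw [Ideal.span_le]
    rintro _ ⟨h, hh, rfl⟩
    rw [TermOrder.leadTerm, ← mul_one (coeff _ h), ← C_mul_monomial]
    exact Ideal.mul_mem_left _ _ (Ideal.subset_span ⟨_, ⟨h, hh, rfl⟩, rfl⟩)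
  obtain ⟨_, ⟨h, hh, rfl⟩, hle⟩ := mem_ideal_span_monomial_image.1 (hspan hr) α hα
  exact ⟨h, hh, hle⟩

section Lifting

variable {k : Type*} [CommRing k] {t : TermOrder n} {ω : Fin n → ℝ}
  {I : Ideal (MvPolynomial (Fin n) k)} {H : Finset (MvPolynomial (Fin n) k)}

lemma exists_mem_support_leadExp_le (hH : IsGroebnerBasis t I H)
    (hω : ω ∈ closure {v | initialIdealW v I = initialIdealT t I})
    {p : MvPolynomial (Fin n) k} (hp : p ∈ initialIdealW ω I) (hp0 : p ≠ 0) :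
    ∃ α ∈ p.support, ∃ h ∈ H, t.leadExp h ≤ α := by
  obtain ⟨β, hβ⟩ := support_nonempty.2 hp0
  obtain ⟨F, hF, hF0, hFp⟩ := exists_initialForm_eq_weightedHomogeneousComponent hp
    (weightedHomogeneousComponent_ne_zero (ω := ω) hβ)
  obtain ⟨v, hvI, hv⟩ := exists_mem_wt_lt_of_mem_closure hω F.support
  have hmem : initialForm v F ∈ Ideal.span (t.leadTerm '' (H : Set _)) := by
    rw [hH.2, ← hvI]
    exact initialForm_mem_initialIdealW hF hF0
  obtain ⟨α, hα⟩ := support_nonempty.2 (initialForm_ne_zero v hF0)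
  have hαp : α ∈ p.support := by
    have := support_initialForm_subset hv hα
    rw [hFp] at this
    exact (mem_support_weightedHomogeneousComponent.1 this).2
  exact ⟨α, hαp, exists_leadExp_le_of_mem_span_leadTerm hmem hα⟩

lemma exists_wt_lt_of_sub_mem (hH : IsGroebnerBasis t I H)
    (hω : ω ∈ closure {v | initialIdealW v I = initialIdealT t I})
    {m N : MvPolynomial (Fin n) k} (hm : m ∈ initialIdealW ω I) (hmN : m - N ∈ I)
    (hN : ∀ α ∈ N.support, ∀ h ∈ H, ¬ t.leadExp h ≤ α) :
    ∀ β ∈ N.support, ∃ α ∈ m.support, wt ω β < wt ω α := by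
  classical
  intro β hβ
  by_contra! hmβ
  obtain ⟨γ, hγ, hNγ⟩ := N.support.exists_max_image (wt ω) ⟨β, hβ⟩
  have hle : ∀ α ∈ (m - N).support, wt ω α ≤ wt ω γ := fun α hα =>
    (Finset.mem_union.1 (support_sub _ _ _ hα)).elim
      (fun hαm => (hmβ α hαm).trans (hNγ β hβ)) (hNγ α)
  have htop : weightedHomogeneousComponent ω (wt ω γ) N ∈ initialIdealW ω I := by
    rw [show N = m - (m - N) by abel, map_sub]
    exact sub_mem (weightedHomogeneousComponent_mem_initialIdealW hm _)
      (weightedHomogeneousComponent_mem_initialIdealW_of_mem hmN hle)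
  obtain ⟨α, hα, h, hh, hhα⟩ :=
    exists_mem_support_leadExp_le hH hω htop (weightedHomogeneousComponent_ne_zero hγ)
  exact hN α (mem_support_weightedHomogeneousComponent.1 hα).2 h hh hhα

end Lifting

theorem lifting_lemma_general {k : Type*} [Field k] (t t' t'' : TermOrder n)
    (I : Ideal (MvPolynomial (Fin n) k)) (H : Finset (MvPolynomial (Fin n) k))
    (hH : IsGroebnerBasis t I H)
    (ωr : Fin n → ℝ)
    (hcone : ωr ∈ closure {v : Fin n → ℝ |
        (∀ i, 0 ≤ v i) ∧ initialIdealW v I = initialIdealT t I})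
    (ht'' : t''.lt = refineLt ωr t')
    (M : Finset (MvPolynomial (Fin n) k))
    (hM : IsGroebnerBasis t'' (initialIdealW ωr I) M)
    (nf : MvPolynomial (Fin n) k → MvPolynomial (Fin n) k)
    (hnf : ∀ m ∈ M, m - nf m ∈ I ∧
        ∀ α ∈ (nf m).support, ∀ h ∈ H, ¬ t.leadExp h ≤ α) :
    (∀ m ∈ M, m - nf m ∈ I) ∧
    Ideal.span ((fun m => t''.leadTerm (m - nf m)) ''
        (M : Set (MvPolynomial (Fin n) k)))
      = initialIdealT t'' I := by
  have hω := closure_mono (fun v hv => hv.2) hcone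
  have hlift : ∀ m ∈ M, t''.leadTerm (m - nf m) = t''.leadTerm m := fun m hm =>
    leadTerm_sub_of_wt_lt ht'' (exists_wt_lt_of_sub_mem hH hω (hM.1 m hm) (hnf m hm).1 (hnf m hm).2)
  refine ⟨fun m hm => (hnf m hm).1, le_antisymm ?_ ?_⟩
  · rw [Ideal.span_le]
    rintro _ ⟨m, hm, rfl⟩
    by_cases h0 : m - nf m = 0
    · simp only [h0, TermOrder.leadTerm_zero]
      exact zero_mem _
    · exact Ideal.subset_span ⟨_, (hnf m hm).1, h0, rfl⟩
  · rw [Set.image_congr hlift, hM.2, initialIdealT, Ideal.span_le]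
    rintro _ ⟨f, hf, hf0, rfl⟩
    rw [← leadTerm_initialForm ht'' hf0]
    exact Ideal.subset_span
      ⟨_, initialForm_mem_initialIdealW hf hf0, initialForm_ne_zero ωr hf0, rfl⟩

/-- Lifting lemma for the Gröbner walk. If `H` is a Gröbner basis of `I`
w.r.t. `t`, `ω` lies in the closed Gröbner cone of `t` for `I`, and `M` is a Gröbner
basis of `in_ω(I)` w.r.t. the refinement `t''` of `ω` by `t'`, then
`{m - nf_H(m) : m ∈ M}` is a Gröbner basis of `I` w.r.t. `t''`. -/
theorem lifting_lemma {k : Type*} [Field k] (t t' t'' : TermOrder n)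
    (I : Ideal (MvPolynomial (Fin n) k)) (H : Finset (MvPolynomial (Fin n) k))
    (hH : IsGroebnerBasis t I H) (h0 : (0 : MvPolynomial (Fin n) k) ∉ H)
    (ω : Fin n → ℚ) (hω : ∀ i, 0 ≤ ω i)
    (ωr : Fin n → ℝ) (hωr : ωr = fun i => (ω i : ℝ))
    (hcone : ωr ∈ closure {v : Fin n → ℝ |
        (∀ i, 0 ≤ v i) ∧ initialIdealW v I = initialIdealT t I})
    (ht'' : t''.lt = refineLt ωr t')
    (M : Finset (MvPolynomial (Fin n) k))
    (hM : IsGroebnerBasis t'' (initialIdealW ωr I) M)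
    (nf : MvPolynomial (Fin n) k → MvPolynomial (Fin n) k)
    (hnf : ∀ m ∈ M, m - nf m ∈ I ∧
        ∀ α ∈ (nf m).support, ∀ h ∈ H, ¬ t.leadExp h ≤ α) :
    (∀ m ∈ M, m - nf m ∈ I) ∧
    Ideal.span ((fun m => t''.leadTerm (m - nf m)) ''
        (M : Set (MvPolynomial (Fin n) k)))
      = initialIdealT t'' I :=
  lifting_lemma_general t t' t'' I H hH ωr hcone ht'' M hM nf hnf
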